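/- Let n ≥ 5 and α₂,…,αₙ ∈ ℂ with α₂ ≠ 0. Then the transposed 0-Poisson algebra TP₀(0,α₂,…,αₙ) is isomorphic to TP₀(0,1,0,…,0), i.e., to the structure on μ₀ⁿ with [e₁,e₂] = e₂ and all other basis brackets zero. -/

import Mathlib

open Finset

/-- The null-filiform associative multiplication on `ℂⁿ = Fin n → ℂ`.
The basis vector `e_i` (1-based) corresponds to the coordinate `i - 1`, and
`e_i · e_j = e_{i+j}` if `i + j ≤ n`, and `0` otherwise. -/
noncomputable def nfMul (n : ℕ) (x y : Fin n → ℂ) : Fin n → ℂ :=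
  fun k => ∑ i : Fin n, ∑ j : Fin n,
    if (i : ℕ) + (j : ℕ) + 1 = (k : ℕ) then x i * y j else 0

/-- The 1-based basis vector `e i` of `ℂⁿ` (zero if `i` is out of range `1,…,n`). -/
noncomputable def nfE (n : ℕ) (i : ℕ) : Fin n → ℂ :=
  fun k => if (k : ℕ) + 1 = i then 1 else 0

/-- The coefficient of the basis vector `e i` (1-based) in `x`. -/
noncomputable def nfCoeff (n : ℕ) (x : Fin n → ℂ) (i : ℕ) : ℂ :=
  ∑ k : Fin n, if (k : ℕ) + 1 = i then x k else 0

/-- A Lie bracket (bilinear, alternating, satisfying the Jacobi identity)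
on a complex vector space. -/
structure LieBracketOn (L : Type*) [AddCommGroup L] [Module ℂ L] where
  br : L → L → L
  add_left : ∀ x y z, br (x + y) z = br x z + br y z
  smul_left : ∀ (c : ℂ) (x y : L), br (c • x) y = c • br x y
  add_right : ∀ x y z, br x (y + z) = br x y + br x z
  smul_right : ∀ (c : ℂ) (x y : L), br x (c • y) = c • br x y
  alt : ∀ x, br x x = 0
  jacobi : ∀ x y z, br (br x y) z + br (br y z) x + br (br z x) y = 0

/-- `(μ₀ⁿ, ·, [-,-])` is a transposed `δ`-Poisson algebra:
`δ • (z · [x,y]) = [z·x, y] + [x, z·y]`. -/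
noncomputable def IsTransposedPoisson (n : ℕ) (δ : ℂ) (B : LieBracketOn (Fin n → ℂ)) : Prop :=
  ∀ x y z, δ • nfMul n z (B.br x y) = B.br (nfMul n z x) y + B.br x (nfMul n z y)

/-- `(μ₀ⁿ, ·, [-,-])` is a `δ`-Poisson algebra:
`[x, y·z] = δ • ([x,y]·z + y·[x,z])`. -/
noncomputable def IsDeltaPoisson (n : ℕ) (δ : ℂ) (B : LieBracketOn (Fin n → ℂ)) : Prop :=
  ∀ x y z, B.br x (nfMul n y z) = δ • (nfMul n (B.br x y) z + nfMul n y (B.br x z))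

/-- The bracket of the transposed 0-Poisson algebra `TP₀(α₁,…,αₙ)` on `μ₀ⁿ`:
determined by `[e₁,e₂] = ∑_{t=1}^n αₜ eₜ` and `[eᵢ,eⱼ] = 0` for all other
pairs `i < j`. -/
noncomputable def brTP0 (n : ℕ) (α : ℕ → ℂ) (x y : Fin n → ℂ) : Fin n → ℂ :=
  (nfCoeff n x 1 * nfCoeff n y 2 - nfCoeff n x 2 * nfCoeff n y 1) •
    ∑ t ∈ Finset.Icc 1 n, α t • nfE n t

/-- The bracket of the transposed 1-Poisson algebra `TP₁(α₂,…,αₙ)` on `μ₀ⁿ`: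
determined by `[e₁,eᵢ] = ∑_{t=i}^n α_{t-i+2} eₜ` for `2 ≤ i ≤ n` and
`[eᵢ,eⱼ] = 0` for `2 ≤ i < j ≤ n`. -/
noncomputable def brTP1 (n : ℕ) (α : ℕ → ℂ) (x y : Fin n → ℂ) : Fin n → ℂ :=
  ∑ i ∈ Finset.Icc 2 n,
    (nfCoeff n x 1 * nfCoeff n y i - nfCoeff n x i * nfCoeff n y 1) •
      ∑ t ∈ Finset.Icc i n, α (t + 2 - i) • nfE n t

/-- The bracket of the transposed `δ`-Poisson algebra `TP_δ(a, b, c)`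
(`a = α_{n-2}`, `b = α_{n-1}`, `c = αₙ`) on `μ₀ⁿ`: determined by
`[e₁,e₂] = a e_{n-2} + b e_{n-1} + c eₙ`, `[e₁,e₃] = δ(a e_{n-1} + b eₙ)`,
`[e₂,e₃] = ((δ²-δ)/2) a eₙ`, `[e₁,e₄] = ((δ²+δ)/2) a eₙ`, and `[eᵢ,eⱼ] = 0`
for all other pairs `i < j`. -/
noncomputable def brTPd (n : ℕ) (δ a b c : ℂ) (x y : Fin n → ℂ) : Fin n → ℂ :=
  (nfCoeff n x 1 * nfCoeff n y 2 - nfCoeff n x 2 * nfCoeff n y 1) •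
      (a • nfE n (n-2) + b • nfE n (n-1) + c • nfE n n)
  + (nfCoeff n x 1 * nfCoeff n y 3 - nfCoeff n x 3 * nfCoeff n y 1) •
      (δ • (a • nfE n (n-1) + b • nfE n n))
  + (nfCoeff n x 2 * nfCoeff n y 3 - nfCoeff n x 3 * nfCoeff n y 2) •
      (((δ^2 - δ)/2 * a) • nfE n n)
  + (nfCoeff n x 1 * nfCoeff n y 4 - nfCoeff n x 4 * nfCoeff n y 1) •
      (((δ^2 + δ)/2 * a) • nfE n n)

/-- Two bracket structures on `μ₀ⁿ` are isomorphic (as transposed δ-Poisson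
algebras): there is a linear bijection preserving both `·` and `[-,-]`. -/
noncomputable def TPIso (n : ℕ) (B B' : (Fin n → ℂ) → (Fin n → ℂ) → (Fin n → ℂ)) : Prop :=
  ∃ φ : (Fin n → ℂ) ≃ₗ[ℂ] (Fin n → ℂ),
    (∀ x y, φ (nfMul n x y) = nfMul n (φ x) (φ y)) ∧
    ∀ x y, φ (B x y) = B' (φ x) (φ y)



/-- Recursively defined coefficients of the square root polynomial. -/
noncomputable def cc (α : ℕ → ℂ) : ℕ → ℂ
  | 0 => 0
  | 1 => (α 2)⁻¹
  | (j+2) => ((α 2)⁻¹^3 * α (j+3)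
      - ∑ a ∈ (Finset.Icc 2 (j+1)).attach, cc α a.1 * cc α (j+3-a.1)) * (α 2) / 2
termination_by j => j
decreasing_by
  · have := Finset.mem_Icc.mp a.2; omega
  · have := Finset.mem_Icc.mp a.2; omega

lemma cc_conv (α : ℕ → ℂ) (h2 : α 2 ≠ 0) (m : ℕ) (hm : 2 ≤ m) :
    ∑ a ∈ Finset.Icc 1 (m-1), cc α a * cc α (m-a) = (α 2)⁻¹^3 * α m := by
  match m, hm with
  | 2, _ =>
    rw [show (2:ℕ)-1 = 1 from rfl, Finset.Icc_self, Finset.sum_singleton]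
    rw [show (2:ℕ)-1 = 1 from rfl]
    rw [show cc α 1 = (α 2)⁻¹ from by rw [cc]]
    field_simp
  | (j+3), _ =>
    have key : Finset.Icc 1 (j+2) = insert 1 (insert (j+2) (Finset.Icc 2 (j+1))) := by
      ext a; simp [Finset.mem_Icc]; omega
    rw [show j+3-1 = j+2 by omega, key]
    rw [Finset.sum_insert (by simp), Finset.sum_insert (by simp [Finset.mem_Icc])]
    have hsum : ∑ a ∈ Finset.Icc 2 (j+1), cc α a * cc α (j+3-a)
        = ∑ a ∈ (Finset.Icc 2 (j+1)).attach, cc α a.1 * cc α (j+3-a.1) :=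
      (Finset.sum_attach _ _).symm
    rw [show j+3-1 = j+2 by omega, show j+3-(j+2) = 1 by omega, hsum]
    have hdef : cc α (j+2) = ((α 2)⁻¹^3 * α (j+3)
      - ∑ a ∈ (Finset.Icc 2 (j+1)).attach, cc α a.1 * cc α (j+3-a.1)) * (α 2) / 2 := by
      rw [cc]
    have h1d : cc α 1 = (α 2)⁻¹ := by rw [cc]
    rw [hdef, h1d]
    linear_combination ((α 2)⁻¹^3 * α (j+3)
      - ∑ a ∈ (Finset.Icc 2 (j+1)).attach, cc α a.1 * cc α (j+3-a.1)) * inv_mul_cancel₀ h2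

/-- If the constant coefficient of `W` vanishes, coefficients of `W^m` below `m` vanish. -/
lemma W_pow_coeff_lt (W : Polynomial ℂ) (hW : W.coeff 0 = 0) (m r : ℕ) (hr : r < m) :
    (W ^ m).coeff r = 0 := by
  have hX : Polynomial.X ∣ W := Polynomial.X_dvd_iff.mpr hW
  exact (Polynomial.X_pow_dvd_iff.mp (pow_dvd_pow_of_dvd hX m)) r hr

lemma W_pow_coeff_diag (W : Polynomial ℂ) (hW : W.coeff 0 = 0) (m : ℕ) :
    (W ^ m).coeff m = (W.coeff 1) ^ m := by
  induction m with
  | zero => simp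
  | succ m ih =>
    rw [pow_succ, Polynomial.coeff_mul]
    rw [Finset.sum_eq_single (m, 1)]
    · rw [ih, pow_succ]
    · rintro ⟨a, b⟩ hab hne
      simp only [Finset.HasAntidiagonal.mem_antidiagonal] at hab
      rcases Nat.lt_or_ge a m with h | h
      · rw [W_pow_coeff_lt W hW m a h, zero_mul]
      · have hb : b = 0 ∨ a = m ∧ b = 1 := by omega
        rcases hb with hb | ⟨ha, hb⟩
        · rw [hb, hW, mul_zero]
        · exact absurd (by rw [ha, hb]) hne
    · intro h; simp at h

noncomputable def Wpoly (n : ℕ) (α : ℕ → ℂ) : Polynomial ℂ :=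
  ∑ j ∈ Finset.Icc 1 (n-1), Polynomial.C (cc α j) * Polynomial.X ^ j

lemma Wpoly_coeff (n : ℕ) (α : ℕ → ℂ) (r : ℕ) :
    (Wpoly n α).coeff r = if 1 ≤ r ∧ r ≤ n-1 then cc α r else 0 := by
  rw [Wpoly, Polynomial.finset_sum_coeff]
  simp only [Polynomial.coeff_C_mul, Polynomial.coeff_X_pow]
  simp only [mul_ite, mul_one, mul_zero]
  rw [Finset.sum_ite_eq (Finset.Icc 1 (n-1)) r (fun j => cc α j)]
  simp [Finset.mem_Icc]

lemma Wpoly_coeff_zero (n : ℕ) (α : ℕ → ℂ) : (Wpoly n α).coeff 0 = 0 := by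
  simp [Wpoly_coeff]

lemma Wpoly_sq_coeff (n : ℕ) (α : ℕ → ℂ) (h1 : α 1 = 0) (h2 : α 2 ≠ 0) (hn : 5 ≤ n)
    (m : ℕ) (hm1 : 1 ≤ m) (hm : m ≤ n) :
    ((Wpoly n α)^2).coeff m = (α 2)⁻¹^3 * α m := by
  rcases Nat.lt_or_ge m 2 with h | h
  · interval_cases m
    · rw [W_pow_coeff_lt _ (Wpoly_coeff_zero n α) 2 1 (by omega), h1, mul_zero]
  · rw [pow_two, Polynomial.coeff_mul, ← cc_conv α h2 m h]
    rw [Finset.Nat.sum_antidiagonal_eq_sum_range_succ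
      (fun a b => (Wpoly n α).coeff a * (Wpoly n α).coeff b)]
    rw [← Finset.sum_subset (show Finset.Icc 1 (m-1) ⊆ Finset.range (m+1) by
        intro a ha; simp [Finset.mem_Icc] at ha ⊢; omega)]
    · apply Finset.sum_congr rfl
      intro a ha
      simp only [Finset.mem_Icc] at ha
      rw [Wpoly_coeff, Wpoly_coeff, if_pos (by omega), if_pos (by omega)]
    · intro a ha hna
      simp only [Finset.mem_range] at ha
      simp only [Finset.mem_Icc, not_and, not_le] at hna
      rcases Nat.eq_zero_or_pos a with rfl | hpos
      · rw [Wpoly_coeff_zero, zero_mul]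
      · have : m - a = 0 := by omega
        rw [this, Wpoly_coeff_zero, mul_zero]

noncomputable def Tq (n : ℕ) (p : Polynomial ℂ) : Fin n → ℂ := fun k => p.coeff ((k : ℕ) + 1)

lemma nfMul_Tq (n : ℕ) (p q : Polynomial ℂ) (hp : p.coeff 0 = 0) (hq : q.coeff 0 = 0) :
    nfMul n (Tq n p) (Tq n q) = Tq n (p * q) := by
  funext k
  show (∑ i : Fin n, ∑ j : Fin n,
      if (i:ℕ) + (j:ℕ) + 1 = (k:ℕ) then p.coeff ((i:ℕ)+1) * q.coeff ((j:ℕ)+1) else 0)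
    = (p * q).coeff ((k:ℕ)+1)
  have inner : ∀ i : Fin n, (∑ j : Fin n,
      if (i:ℕ) + (j:ℕ) + 1 = (k:ℕ) then p.coeff ((i:ℕ)+1) * q.coeff ((j:ℕ)+1) else 0)
      = if (i:ℕ) + 1 ≤ (k:ℕ) then p.coeff ((i:ℕ)+1) * q.coeff ((k:ℕ)-(i:ℕ)) else 0 := by
    intro i
    rcases le_or_gt ((i:ℕ)+1) (k:ℕ) with h | h
    · rw [if_pos h]
      rw [Finset.sum_eq_single (⟨(k:ℕ)-1-(i:ℕ), by have := k.2; omega⟩ : Fin n)]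
      · rw [if_pos (by simp; omega)]
        congr 2
        simp; omega
      · intro j _ hne
        rw [if_neg (by
          intro hc
          apply hne
          apply Fin.ext
          simp
          omega)]
      · intro h; exact absurd (Finset.mem_univ _) h
    · rw [if_neg (by omega)]
      apply Finset.sum_eq_zero
      intro j _
      rw [if_neg (by omega)]
  rw [Finset.sum_congr rfl (fun i _ => inner i)]
  rw [Polynomial.coeff_mul,
    Finset.Nat.sum_antidiagonal_eq_sum_range_succ (fun a b => p.coeff a * q.coeff b)]
  rw [Finset.sum_range_succ' (fun a => p.coeff a * q.coeff ((k:ℕ)+1-a)) ((k:ℕ)+1)]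
  rw [hp, zero_mul, add_zero]
  rw [Finset.sum_range_succ (fun a => p.coeff (a+1) * q.coeff ((k:ℕ)+1-(a+1))) (k:ℕ)]
  rw [show (k:ℕ)+1-((k:ℕ)+1) = 0 by omega, hq, mul_zero, add_zero]
  rw [show (∑ i : Fin n, if (i:ℕ)+1 ≤ (k:ℕ) then p.coeff ((i:ℕ)+1) * q.coeff ((k:ℕ)-(i:ℕ)) else 0)
    = ∑ i ∈ Finset.range n, if i+1 ≤ (k:ℕ) then p.coeff (i+1) * q.coeff ((k:ℕ)-i) else 0
    from Fin.sum_univ_eq_sum_range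
      (fun i => if i+1 ≤ (k:ℕ) then p.coeff (i+1) * q.coeff ((k:ℕ)-i) else 0) n]
  rw [← Finset.sum_subset (show Finset.range (k:ℕ) ⊆ Finset.range n by
      intro a ha; simp at ha ⊢; have := k.2; omega)]
  · apply Finset.sum_congr rfl
    intro a ha
    simp only [Finset.mem_range] at ha
    rw [if_pos (by omega)]
    congr 2
    omega
  · intro a _ hna
    simp only [Finset.mem_range] at hna
    rw [if_neg (by omega)]

noncomputable def Pmap (n : ℕ) (W : Polynomial ℂ) (x : Fin n → ℂ) : Polynomial ℂ :=
  ∑ i : Fin n, Polynomial.C (x i) * W ^ ((i : ℕ) + 1)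

lemma Pmap_coeff (n : ℕ) (W : Polynomial ℂ) (x : Fin n → ℂ) (r : ℕ) :
    (Pmap n W x).coeff r = ∑ i : Fin n, x i * (W ^ ((i:ℕ)+1)).coeff r := by
  rw [Pmap, Polynomial.finset_sum_coeff]
  simp [Polynomial.coeff_C_mul]

lemma Pmap_coeff_zero (n : ℕ) (W : Polynomial ℂ) (x : Fin n → ℂ) (hW : W.coeff 0 = 0) :
    (Pmap n W x).coeff 0 = 0 := by
  rw [Pmap_coeff]
  apply Finset.sum_eq_zero
  intro i _
  rw [W_pow_coeff_lt W hW ((i:ℕ)+1) 0 (by omega), mul_zero]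

lemma Pmap_mul (n : ℕ) (W : Polynomial ℂ) (hW : W.coeff 0 = 0) (x y : Fin n → ℂ) :
    Tq n (Pmap n W (nfMul n x y)) = Tq n (Pmap n W x * Pmap n W y) := by
  funext k
  show (Pmap n W (nfMul n x y)).coeff ((k:ℕ)+1) = (Pmap n W x * Pmap n W y).coeff ((k:ℕ)+1)
  have hrhs : Pmap n W x * Pmap n W y
      = ∑ i : Fin n, ∑ j : Fin n, Polynomial.C (x i * y j) * W ^ ((i:ℕ)+(j:ℕ)+2) := by
    rw [Pmap, Pmap, Finset.sum_mul_sum]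
    apply Finset.sum_congr rfl; intro i _
    apply Finset.sum_congr rfl; intro j _
    rw [Polynomial.C_mul]
    ring
  rw [hrhs, Pmap_coeff]
  simp only [Polynomial.finset_sum_coeff, Polynomial.coeff_C_mul]
  have lhs_eq : ∀ k' : Fin n, nfMul n x y k' * (W ^ ((k':ℕ)+1)).coeff ((k:ℕ)+1)
      = ∑ i : Fin n, ∑ j : Fin n,
        if (i:ℕ)+(j:ℕ)+1 = (k':ℕ) then x i * y j * (W ^ ((k':ℕ)+1)).coeff ((k:ℕ)+1) else 0 := by
    intro k'
    rw [nfMul, Finset.sum_mul]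
    apply Finset.sum_congr rfl; intro i _
    rw [Finset.sum_mul]
    apply Finset.sum_congr rfl; intro j _
    split <;> simp
  rw [Finset.sum_congr rfl (fun k' _ => lhs_eq k')]
  rw [Finset.sum_comm]
  apply Finset.sum_congr rfl; intro i _
  rw [Finset.sum_comm]
  apply Finset.sum_congr rfl; intro j _
  rcases lt_or_ge ((i:ℕ)+(j:ℕ)+1) n with h | h
  · rw [Finset.sum_eq_single (⟨(i:ℕ)+(j:ℕ)+1, h⟩ : Fin n)]
    · rw [if_pos (by simp)]
    · intro k' _ hne
      rw [if_neg (fun hc => hne (Fin.ext (by simp [← hc])))]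
    · intro hmem; exact absurd (Finset.mem_univ _) hmem
  · have h0 : (W ^ ((i:ℕ)+(j:ℕ)+2)).coeff ((k:ℕ)+1) = 0 :=
      W_pow_coeff_lt W hW _ _ (by have := k.2; omega)
    rw [h0, mul_zero]
    apply Finset.sum_eq_zero
    intro k' _
    rw [if_neg (by have := k'.2; omega)]

noncomputable def phiL (n : ℕ) (W : Polynomial ℂ) : (Fin n → ℂ) →ₗ[ℂ] (Fin n → ℂ) where
  toFun := fun x => Tq n (Pmap n W x)
  map_add' := fun x y => by
    funext k
    show (Pmap n W (x+y)).coeff _ = (Pmap n W x).coeff _ + (Pmap n W y).coeff _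
    rw [Pmap_coeff, Pmap_coeff, Pmap_coeff, ← Finset.sum_add_distrib]
    apply Finset.sum_congr rfl; intro i _
    simp [add_mul]
  map_smul' := fun c x => by
    funext k
    show (Pmap n W (c • x)).coeff _ = c * (Pmap n W x).coeff _
    rw [Pmap_coeff, Pmap_coeff, Finset.mul_sum]
    apply Finset.sum_congr rfl; intro i _
    simp [mul_assoc]

lemma phiL_apply (n : ℕ) (W : Polynomial ℂ) (x : Fin n → ℂ) (k : Fin n) :
    phiL n W x k = ∑ i : Fin n, x i * (W ^ ((i:ℕ)+1)).coeff ((k:ℕ)+1) := by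
  show (Pmap n W x).coeff _ = _
  rw [Pmap_coeff]

lemma phiL_inj (n : ℕ) (W : Polynomial ℂ) (hW : W.coeff 0 = 0) (hW1 : W.coeff 1 ≠ 0) :
    Function.Injective (phiL n W) := by
  rw [← LinearMap.ker_eq_bot, LinearMap.ker_eq_bot']
  intro x hx
  funext k
  show x k = 0
  have main : ∀ m : ℕ, ∀ hm : m < n, x ⟨m, hm⟩ = 0 := by
    intro m
    induction m using Nat.strong_induction_on with
    | _ m ih =>
      intro hm
      have h0 : phiL n W x ⟨m, hm⟩ = 0 := by rw [hx]; rfl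
      rw [phiL_apply] at h0
      rw [Finset.sum_eq_single (⟨m, hm⟩ : Fin n)] at h0
      · simp only [W_pow_coeff_diag W hW] at h0
        exact (mul_eq_zero.mp h0).resolve_right (pow_ne_zero _ hW1)
      · intro i _ hne
        rcases lt_or_ge (i:ℕ) m with h | h
        · rw [ih i h i.2]; ring
        · have : m + 1 < (i:ℕ) + 1 := by
            rcases Nat.lt_or_ge m (i:ℕ) with h' | h'
            · omega
            · exact absurd (Fin.ext (by simp; omega)) hne
          rw [W_pow_coeff_lt W hW _ _ (by simpa using this), mul_zero]
      · intro hmem; exact absurd (Finset.mem_univ _) hmem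
  have := main (k:ℕ) k.2
  simpa using this

noncomputable def phiE (n : ℕ) (W : Polynomial ℂ) (hW : W.coeff 0 = 0) (hW1 : W.coeff 1 ≠ 0) :
    (Fin n → ℂ) ≃ₗ[ℂ] (Fin n → ℂ) :=
  LinearEquiv.ofBijective (phiL n W)
    ⟨phiL_inj n W hW hW1,
     (LinearMap.injective_iff_surjective).mp (phiL_inj n W hW hW1)⟩

lemma phiE_apply (n : ℕ) (W : Polynomial ℂ) (hW : W.coeff 0 = 0) (hW1 : W.coeff 1 ≠ 0)
    (x : Fin n → ℂ) : phiE n W hW hW1 x = Tq n (Pmap n W x) := rfl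

lemma nfCoeff_eq (n : ℕ) (x : Fin n → ℂ) (i : ℕ) (h1 : 1 ≤ i) (h2 : i ≤ n) :
    nfCoeff n x i = x ⟨i-1, by omega⟩ := by
  rw [nfCoeff, Finset.sum_eq_single (⟨i-1, by omega⟩ : Fin n)]
  · rw [if_pos (by simp; omega)]
  · intro k _ hne
    rw [if_neg (fun hc => hne (Fin.ext (by simp; omega)))]
  · intro hmem; exact absurd (Finset.mem_univ _) hmem

lemma sum_std (n : ℕ) (hn : 2 ≤ n) :
    ∑ t ∈ Finset.Icc 1 n, (if t = 2 then (1:ℂ) else 0) • nfE n t = nfE n 2 := by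
  funext k
  rw [Finset.sum_apply]
  rw [Finset.sum_eq_single 2]
  · simp [nfE]
  · intro t _ hne
    simp [nfE, hne]
  · intro hmem
    exact absurd (Finset.mem_Icc.mpr (by omega)) hmem

lemma sum_v (n : ℕ) (α : ℕ → ℂ) (k : Fin n) :
    (∑ t ∈ Finset.Icc 1 n, α t • nfE n t) k = α ((k:ℕ)+1) := by
  rw [Finset.sum_apply]
  rw [Finset.sum_eq_single ((k:ℕ)+1)]
  · simp [nfE]
  · intro t _ hne
    simp [nfE]
    intro hc; exact absurd hc.symm hne
  · intro hmem
    exact absurd (Finset.mem_Icc.mpr (by have := k.2; omega)) hmem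

lemma phi_coord0 (n : ℕ) (W : Polynomial ℂ) (hW : W.coeff 0 = 0) (hn : 1 ≤ n)
    (x : Fin n → ℂ) :
    (∑ i : Fin n, x i * (W ^ ((i:ℕ)+1)).coeff 1) = x ⟨0, by omega⟩ * W.coeff 1 := by
  rw [Finset.sum_eq_single (⟨0, by omega⟩ : Fin n)]
  · norm_num
  · intro i _ hne
    have : (1:ℕ) < (i:ℕ)+1 := by
      rcases Nat.eq_zero_or_pos (i:ℕ) with h | h
      · exact absurd (Fin.ext (by simp [h])) hne
      · omega
    rw [W_pow_coeff_lt W hW _ _ this, mul_zero]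
  · intro hmem; exact absurd (Finset.mem_univ _) hmem

lemma phi_coord1 (n : ℕ) (W : Polynomial ℂ) (hW : W.coeff 0 = 0) (hn : 2 ≤ n)
    (x : Fin n → ℂ) :
    (∑ i : Fin n, x i * (W ^ ((i:ℕ)+1)).coeff 2)
      = x ⟨0, by omega⟩ * W.coeff 2 + x ⟨1, by omega⟩ * (W^2).coeff 2 := by
  rw [Finset.sum_eq_add_of_mem (⟨0, by omega⟩ : Fin n) (⟨1, by omega⟩ : Fin n)
    (Finset.mem_univ _) (Finset.mem_univ _) (by simp [Fin.ext_iff])]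
  · norm_num
  · intro i _ hi
    have h2 : (2:ℕ) < (i:ℕ)+1 := by
      have h0 : (i:ℕ) ≠ 0 := fun hc => hi.1 (Fin.ext (by simp [hc]))
      have h1' : (i:ℕ) ≠ 1 := fun hc => hi.2 (Fin.ext (by simp [hc]))
      omega
    rw [W_pow_coeff_lt W hW _ _ h2, mul_zero]

/-- for `n ≥ 5` and `α₂ ≠ 0`, `TP₀(0,α₂,…,αₙ)` is isomorphic to
`TP₀(0,1,0,…,0)`. -/
theorem stmt_8 (n : ℕ) (hn : 5 ≤ n) (α : ℕ → ℂ) (h1 : α 1 = 0) (h2 : α 2 ≠ 0) :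
    TPIso n (brTP0 n α) (brTP0 n fun t => if t = 2 then 1 else 0) := by
  have hW0 : (Wpoly n α).coeff 0 = 0 := Wpoly_coeff_zero n α
  have hc1 : (Wpoly n α).coeff 1 = (α 2)⁻¹ := by
    rw [Wpoly_coeff, if_pos (by omega)]
    rw [cc]
  have hW1ne : (Wpoly n α).coeff 1 ≠ 0 := by rw [hc1]; exact inv_ne_zero h2
  set φ := phiE n (Wpoly n α) hW0 hW1ne with hφdef
  have hmul : ∀ x y, φ (nfMul n x y) = nfMul n (φ x) (φ y) := by
    intro x y
    rw [hφdef, phiE_apply, phiE_apply, phiE_apply,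
      nfMul_Tq n _ _ (Pmap_coeff_zero n _ x hW0) (Pmap_coeff_zero n _ y hW0),
      Pmap_mul n _ hW0]
  have hTqW2 : Tq n ((Wpoly n α)^2)
      = (α 2)⁻¹^3 • (∑ t ∈ Finset.Icc 1 n, α t • nfE n t) := by
    funext k
    rw [Pi.smul_apply, sum_v n α k, smul_eq_mul]
    exact Wpoly_sq_coeff n α h1 h2 hn ((k:ℕ)+1) (by omega) (by have := k.2; omega)
  have hφe2 : φ (nfE n 2) = Tq n ((Wpoly n α)^2) := by
    rw [hφdef, phiE_apply]
    funext k
    rw [show Tq n (Pmap n (Wpoly n α) (nfE n 2)) k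
        = ∑ i : Fin n, nfE n 2 i * ((Wpoly n α) ^ ((i:ℕ)+1)).coeff ((k:ℕ)+1)
      from Pmap_coeff n (Wpoly n α) (nfE n 2) ((k:ℕ)+1)]
    rw [Finset.sum_eq_single (⟨1, by omega⟩ : Fin n)]
    · simp [nfE, Tq]
    · intro i _ hne
      have : nfE n 2 i = 0 := by
        rw [nfE, if_neg (fun hc => hne (Fin.ext (by simp; omega)))]
      rw [this, zero_mul]
    · intro hmem; exact absurd (Finset.mem_univ _) hmem
  have hbr : ∀ x y, φ (brTP0 n (fun t => if t = 2 then 1 else 0) x y)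
      = brTP0 n α (φ x) (φ y) := by
    intro x y
    rw [brTP0, sum_std n (by omega), map_smul, hφe2, hTqW2, brTP0]
    rw [smul_smul]
    congr 1
    have hcx1 : nfCoeff n (φ x) 1 = x ⟨0, by omega⟩ * (Wpoly n α).coeff 1 := by
      rw [nfCoeff_eq n _ 1 le_rfl (by omega), hφdef, phiE_apply]
      rw [show Tq n (Pmap n (Wpoly n α) x) ⟨1-1, by omega⟩
          = ∑ i : Fin n, x i * ((Wpoly n α) ^ ((i:ℕ)+1)).coeff 1
        from Pmap_coeff n (Wpoly n α) x 1]
      exact phi_coord0 n (Wpoly n α) hW0 (by omega) x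
    have hcx2 : nfCoeff n (φ x) 2 = x ⟨0, by omega⟩ * (Wpoly n α).coeff 2
        + x ⟨1, by omega⟩ * ((Wpoly n α)^2).coeff 2 := by
      rw [nfCoeff_eq n _ 2 (by omega) (by omega), hφdef, phiE_apply]
      rw [show Tq n (Pmap n (Wpoly n α) x) ⟨2-1, by omega⟩
          = ∑ i : Fin n, x i * ((Wpoly n α) ^ ((i:ℕ)+1)).coeff 2
        from Pmap_coeff n (Wpoly n α) x 2]
      exact phi_coord1 n (Wpoly n α) hW0 (by omega) x
    have hcy1 : nfCoeff n (φ y) 1 = y ⟨0, by omega⟩ * (Wpoly n α).coeff 1 := by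
      rw [nfCoeff_eq n _ 1 le_rfl (by omega), hφdef, phiE_apply]
      rw [show Tq n (Pmap n (Wpoly n α) y) ⟨1-1, by omega⟩
          = ∑ i : Fin n, y i * ((Wpoly n α) ^ ((i:ℕ)+1)).coeff 1
        from Pmap_coeff n (Wpoly n α) y 1]
      exact phi_coord0 n (Wpoly n α) hW0 (by omega) y
    have hcy2 : nfCoeff n (φ y) 2 = y ⟨0, by omega⟩ * (Wpoly n α).coeff 2
        + y ⟨1, by omega⟩ * ((Wpoly n α)^2).coeff 2 := by
      rw [nfCoeff_eq n _ 2 (by omega) (by omega), hφdef, phiE_apply]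
      rw [show Tq n (Pmap n (Wpoly n α) y) ⟨2-1, by omega⟩
          = ∑ i : Fin n, y i * ((Wpoly n α) ^ ((i:ℕ)+1)).coeff 2
        from Pmap_coeff n (Wpoly n α) y 2]
      exact phi_coord1 n (Wpoly n α) hW0 (by omega) y
    have hs2 : ((Wpoly n α)^2).coeff 2 = (α 2)⁻¹^3 * α 2 :=
      Wpoly_sq_coeff n α h1 h2 hn 2 (by omega) (by omega)
    rw [hcx1, hcx2, hcy1, hcy2, hc1, hs2]
    have ex1 : nfCoeff n x 1 = x ⟨0, by omega⟩ := nfCoeff_eq n x 1 le_rfl (by omega)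
    have ex2 : nfCoeff n x 2 = x ⟨1, by omega⟩ := nfCoeff_eq n x 2 (by omega) (by omega)
    have ey1 : nfCoeff n y 1 = y ⟨0, by omega⟩ := nfCoeff_eq n y 1 le_rfl (by omega)
    have ey2 : nfCoeff n y 2 = y ⟨1, by omega⟩ := nfCoeff_eq n y 2 (by omega) (by omega)
    rw [ex1, ex2, ey1, ey2]
    linear_combination (-(α 2)⁻¹^3 *
      (x ⟨0, by omega⟩ * y ⟨1, by omega⟩ - x ⟨1, by omega⟩ * y ⟨0, by omega⟩)) *
      inv_mul_cancel₀ h2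
  refine ⟨φ.symm, ?_, ?_⟩
  · intro x y
    apply φ.injective
    rw [φ.apply_symm_apply, hmul, φ.apply_symm_apply, φ.apply_symm_apply]
  · intro x y
    apply φ.injective
    rw [φ.apply_symm_apply, hbr, φ.apply_symm_apply, φ.apply_symm_apply]
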